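/- arXiv:1105.3642 — 3 statements merged into one kernel-verified Lean document; each statement's English description precedes it below -/
import Mathlib

section
/- If the curvatures of a surface satisfy α·H + β·H' + γ = 0, then the curvatures of its parallel surface at distance a, related by H = (εH̄ + aK̄')·Δ⁻¹, H' = εH̄'·Δ⁻¹, where Δ = 1 + 2aεH̄ + a²K̄' ≠ 0 and ε² = 1, satisfy ε(α + 2aγ)·H̄ + εβ·H̄' + γ = −a(α + aγ)·K̄'. -/
theorem stmt5_general (a α β γ Hb Hb' Kb' ε : ℝ)
    (Δ : ℝ) (hΔdef : Δ = 1 + 2 * a * ε * Hb + a ^ 2 * Kb') (hΔ : Δ ≠ 0)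
    (H H' : ℝ)
    (hH : H = (ε * Hb + a * Kb') / Δ) (hH' : H' = ε * Hb' / Δ)
    (hrel : α * H + β * H' + γ = 0) :
    ε * (α + 2 * a * γ) * Hb + ε * β * Hb' + γ = -(a * (α + a * γ)) * Kb' := by
  have hΔH : Δ * H = ε * Hb + a * Kb' := by rw [hH]; field_simp
  have hΔH' : Δ * H' = ε * Hb' := by rw [hH']; field_simp
  linear_combination Δ * hrel - α * hΔH - β * hΔH' - γ * hΔdef

/-- If α·H + β·H' + γ = 0 then the invariants of the parallel surface satisfy
ε(α + 2aγ)·Hb + εβ·Hb' + γ = −a(α + aγ)·Kb'. -/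
theorem stmt5 (a α β γ Hb Hb' Kb' ε : ℝ)
    (hε : ε = 1 ∨ ε = -1)
    (Δ : ℝ) (hΔdef : Δ = 1 + 2 * a * ε * Hb + a ^ 2 * Kb') (hΔ : Δ ≠ 0)
    (H H' : ℝ)
    (hH : H = (ε * Hb + a * Kb') / Δ) (hH' : H' = ε * Hb' / Δ)
    (hrel : α * H + β * H' + γ = 0) :
    ε * (α + 2 * a * γ) * Hb + ε * β * Hb' + γ = -(a * (α + a * γ)) * Kb' :=
  stmt5_general a α β γ Hb Hb' Kb' ε Δ hΔdef hΔ H H' hH hH' hrel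
end

section
/- If the curvatures of a surface satisfy K' = α·H + β·H' + γ, then the curvatures of its parallel surface at distance a, related by K' = K̄'·Δ⁻¹, H = (εH̄ + aK̄')·Δ⁻¹, H' = εH̄'·Δ⁻¹ with Δ = 1 + 2aεH̄ + a²K̄' ≠ 0 and ε² = 1, satisfy ε(α + 2aγ)·H̄ + εβ·H̄' + γ = (1 − aα − a²γ)·K̄'. -/
theorem stmt6_general (a α β γ Hb Hb' Kb' ε : ℝ)
    (Δ : ℝ) (hΔdef : Δ = 1 + 2 * a * ε * Hb + a ^ 2 * Kb') (hΔ : Δ ≠ 0)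
    (K' H H' : ℝ)
    (hK : K' = Kb' / Δ)
    (hH : H = (ε * Hb + a * Kb') / Δ) (hH' : H' = ε * Hb' / Δ)
    (hrel : K' = α * H + β * H' + γ) :
    ε * (α + 2 * a * γ) * Hb + ε * β * Hb' + γ = (1 - a * α - a ^ 2 * γ) * Kb' := by
  have hcleared : Kb' = α * (ε * Hb + a * Kb') + β * (ε * Hb') + γ * Δ := by
    rw [hrel, hH, hH'] at hK
    field_simp at hK
    linear_combination -hK
  rw [hΔdef] at hcleared
  linear_combination -hcleared

/-- If K' = α·H + β·H' + γ then the invariants of the parallel surface satisfy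
ε(α + 2aγ)·Hb + εβ·Hb' + γ = (1 − aα − a²γ)·Kb'. -/
theorem stmt6 (a α β γ Hb Hb' Kb' ε : ℝ)
    (hε : ε = 1 ∨ ε = -1)
    (Δ : ℝ) (hΔdef : Δ = 1 + 2 * a * ε * Hb + a ^ 2 * Kb') (hΔ : Δ ≠ 0)
    (K' H H' : ℝ)
    (hK : K' = Kb' / Δ)
    (hH : H = (ε * Hb + a * Kb') / Δ) (hH' : H' = ε * Hb' / Δ)
    (hrel : K' = α * H + β * H' + γ) :
    ε * (α + 2 * a * γ) * Hb + ε * β * Hb' + γ = (1 - a * α - a ^ 2 * γ) * Kb' :=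
  stmt6_general a α β γ Hb Hb' Kb' ε Δ hΔdef hΔ K' H H' hK hH hH' hrel
end

section
/- Under the hypotheses of the previous lemma (Codazzi relations for E, G with Weingarten functions f, g), the function μ(u,v) = √(G(u,v))·exp(J(ν(u,v))), where J(ν) = ∫_{ν₀}^{ν} g'(t)/(g(t)−f(t)) dt, has vanishing u-derivative. [Lemma 3.2, second half] -/
open intervalIntegral Real

/-- Partial derivative with respect to the first variable. -/
noncomputable def pu (h : ℝ × ℝ → ℝ) (p : ℝ × ℝ) : ℝ :=
  deriv (fun x => h (x, p.2)) p.1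

/-- Partial derivative with respect to the second variable. -/
noncomputable def pv (h : ℝ × ℝ → ℝ) (p : ℝ × ℝ) : ℝ :=
  deriv (fun y => h (p.1, y)) p.2

open intervalIntegral Real MeasureTheory Set Filter Asymptotics

/-- FTC-1 at a point for an integrand of the form `deriv g * r` where `deriv g`
has constant sign and `r` is continuous, without continuity of `deriv g`. -/
theorem key_deriv (U : Set ℝ) (hU : IsOpen U) (hUc : Convex ℝ U)
    (g r : ℝ → ℝ) (c s : ℝ) (hcU : c ∈ U) (hs : s = 1 ∨ s = -1)
    (hg : ∀ x ∈ U, DifferentiableAt ℝ g x)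
    (hsign : ∀ x ∈ U, 0 ≤ s * deriv g x)
    (hr : ContinuousOn r U)
    (hintg : ∀ a ∈ U, ∀ b ∈ U, IntervalIntegrable (deriv g) volume a b) :
    HasDerivAt (fun y => ∫ t in c..y, deriv g t * r t) (deriv g c * r c) c := by
  have habs : ∀ x ∈ U, |deriv g x| = s * deriv g x := by
    intro x hx
    have h1 : |s * deriv g x| = s * deriv g x := abs_of_nonneg (hsign x hx)
    have h2 : |s| = 1 := by rcases hs with rfl | rfl <;> simp
    rwa [abs_mul, h2, one_mul] at h1
  -- FTC for g on subintervals of U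
  have hftc : ∀ y ∈ U, (∫ t in c..y, deriv g t) = g y - g c := by
    intro y hy
    have hsub : uIcc c y ⊆ U := hUc.ordConnected.uIcc_subset hcU hy
    exact integral_eq_sub_of_hasDerivAt (fun t ht => (hg t (hsub ht)).hasDerivAt)
      (hintg c hcU y hy)
  rw [hasDerivAt_iff_isLittleO]
  have hUn : U ∈ nhds c := hU.mem_nhds hcU
  -- decomposition
  have hdec : (fun y => (∫ t in c..y, deriv g t * r t) - (∫ t in c..c, deriv g t * r t)
        - (y - c) • (deriv g c * r c))
      =ᶠ[nhds c] (fun y => r c * (g y - g c - (y - c) • deriv g c)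
        + ((∫ t in c..y, deriv g t * (r t - r c)) - (y - c) • (deriv g c * (r c - r c)))) := by
    filter_upwards [hUn] with y hy
    have hsub : uIcc c y ⊆ U := hUc.ordConnected.uIcc_subset hcU hy
    have hi1 : IntervalIntegrable (fun t => deriv g t * (r t - r c)) volume c y :=
      (hintg c hcU y hy).mul_continuousOn (((hr.mono hsub).sub continuousOn_const))
    have hi2 : IntervalIntegrable (fun t => r c * deriv g t) volume c y :=
      (hintg c hcU y hy).const_mul _
    have hsplit : (∫ t in c..y, deriv g t * r t)
        = (∫ t in c..y, deriv g t * (r t - r c)) + r c * (g y - g c) := by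
      rw [← hftc y hy, ← intervalIntegral.integral_const_mul, ← integral_add hi1 hi2]
      congr 1; funext t; ring
    rw [hsplit, integral_same]
    simp only [smul_eq_mul]
    ring
  refine IsLittleO.congr' ?_ hdec.symm (EventuallyEq.refl _ _)
  apply IsLittleO.add
  · exact ((hasDerivAt_iff_isLittleO.mp (hg c hcU).hasDerivAt).const_mul_left (r c))
  · -- the main estimate
    simp only [sub_self, mul_zero, smul_eq_mul, sub_zero]
    rw [isLittleO_iff]
    intro ε hε
    obtain ⟨C, hC⟩ := ((hg c hcU).hasDerivAt.isBigO_sub).bound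
    set K : ℝ := |C| + 1 with hK
    have hKpos : 0 < K := by positivity
    set ε' : ℝ := ε / K with hε'
    have hε'pos : 0 < ε' := div_pos hε hKpos
    -- continuity of r at c
    have hrc : ContinuousAt r c := hr.continuousAt hUn
    obtain ⟨δ₁, hδ₁pos, hδ₁⟩ := Metric.continuousAt_iff.mp hrc ε' hε'pos
    obtain ⟨δ₂, hδ₂pos, hδ₂⟩ := Metric.isOpen_iff.mp hU c hcU
    set δ : ℝ := min δ₁ δ₂ with hδdef
    have hδpos : 0 < δ := lt_min hδ₁pos hδ₂pos
    have hball : Metric.ball c δ ⊆ U := (Metric.ball_subset_ball (min_le_right _ _)).trans hδ₂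
    filter_upwards [hC, Metric.ball_mem_nhds c hδpos] with y hCy hyb
    have hyU : y ∈ U := hball hyb
    have hsub : uIcc c y ⊆ Metric.ball c δ :=
      (convex_ball c δ).ordConnected.uIcc_subset (Metric.mem_ball_self hδpos) hyb
    have hbd : ∀ᵐ t ∂(volume.restrict (Set.uIoc c y)),
        ‖deriv g t * (r t - r c)‖ ≤ ε' * (s * deriv g t) := by
      refine ae_restrict_of_forall_mem measurableSet_uIoc (fun t ht => ?_)
      have htb : t ∈ Metric.ball c δ := hsub (uIoc_subset_uIcc ht)
      have htU : t ∈ U := hball htb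
      have hd : dist t c < δ₁ := lt_of_lt_of_le (Metric.mem_ball.mp htb) (min_le_left _ _)
      have hrt : |r t - r c| ≤ ε' := by
        have := hδ₁ hd
        rw [Real.dist_eq] at this
        exact le_of_lt this
      calc ‖deriv g t * (r t - r c)‖ = |deriv g t| * |r t - r c| := by
            rw [Real.norm_eq_abs, abs_mul]
        _ ≤ |deriv g t| * ε' := mul_le_mul_of_nonneg_left hrt (abs_nonneg _)
        _ = ε' * (s * deriv g t) := by rw [habs t htU]; ring
    have hintbd : IntervalIntegrable (fun t => ε' * (s * deriv g t)) volume c y :=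
      ((hintg c hcU y hyU).const_mul s).const_mul ε'
    calc ‖∫ t in c..y, deriv g t * (r t - r c)‖
        ≤ |∫ t in c..y, ε' * (s * deriv g t)| := norm_integral_le_abs_of_norm_le hbd hintbd
      _ = ε' * |s| * |g y - g c| := by
          rw [intervalIntegral.integral_const_mul, intervalIntegral.integral_const_mul, hftc y hyU, abs_mul, abs_mul]
          rw [abs_of_pos hε'pos]; ring
      _ = ε' * |g y - g c| := by rcases hs with rfl | rfl <;> simp
      _ ≤ ε' * (K * ‖y - c‖) := by
          refine mul_le_mul_of_nonneg_left ?_ hε'pos.le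
          calc |g y - g c| ≤ C * ‖y - c‖ := hCy
            _ ≤ K * ‖y - c‖ := mul_le_mul_of_nonneg_right
                ((le_abs_self C).trans (by simp [hK])) (norm_nonneg _)
      _ = ε * ‖y - c‖ := by rw [hε']; field_simp


/-- Lemma 3.2, second half: on a space-like W-surface in principal parameters,
the function μ = √G·e^{J(ν)} does not depend on u. -/
theorem stmt16 (S : Set ℝ) (hS : IsOpen S) (hconv : Convex ℝ S) (ν₀ : ℝ) (hν₀ : ν₀ ∈ S)
    (f g : ℝ → ℝ)
    (hf : ∀ x ∈ S, DifferentiableAt ℝ f x) (hg : ∀ x ∈ S, DifferentiableAt ℝ g x)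
    (hfg : ∀ x ∈ S, f x - g x ≠ 0)
    (hfg' : ∀ x ∈ S, deriv f x * deriv g x ≠ 0)
    (D : Set (ℝ × ℝ)) (hD : IsOpen D)
    (ν : ℝ × ℝ → ℝ) (hν : ContDiffOn ℝ (⊤ : ℕ∞) ν D) (hmaps : ∀ p ∈ D, ν p ∈ S)
    (E G : ℝ × ℝ → ℝ) (hE : ContDiffOn ℝ (⊤ : ℕ∞) E D) (hG : ContDiffOn ℝ (⊤ : ℕ∞) G D)
    (hEpos : ∀ p ∈ D, 0 < E p) (hGpos : ∀ p ∈ D, 0 < G p)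
    (hCodazzi1 : ∀ p ∈ D,
      -(pv E p) / (2 * E p * Real.sqrt (G p))
        = pv (fun q => f (ν q)) p / (Real.sqrt (G p) * (f (ν p) - g (ν p))))
    (hCodazzi2 : ∀ p ∈ D,
      pu G p / (2 * G p * Real.sqrt (E p))
        = pu (fun q => g (ν q)) p / (Real.sqrt (E p) * (f (ν p) - g (ν p))))
    (Jf : ℝ → ℝ)
    (hJf : ∀ x, Jf x = ∫ t in ν₀..x, deriv g t / (g t - f t))
    (μ : ℝ × ℝ → ℝ)
    (hμdef : ∀ p, μ p = Real.sqrt (G p) * Real.exp (Jf (ν p))) :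
    ∀ p ∈ D, pu μ p = 0 := by
  -- `r = 1/(g - f)` is continuous on `S`
  set r : ℝ → ℝ := fun t => (g t - f t)⁻¹ with hrdef
  have hgf : ∀ x ∈ S, g x - f x ≠ 0 := by
    intro x hx
    have := hfg x hx
    intro h; apply this; linarith [sub_eq_zero.mp h]
  have hrcont : ContinuousOn r S := fun x hx =>
    (((hg x hx).continuousAt.sub (hf x hx).continuousAt).continuousWithinAt).inv₀ (hgf x hx)
  -- constant sign of `deriv g` on `S`
  have hne : ∀ x ∈ S, deriv g x ≠ 0 := fun x hx h => hfg' x hx (by rw [h, mul_zero])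
  obtain ⟨s, hs, hsign⟩ : ∃ s : ℝ, (s = 1 ∨ s = -1) ∧ ∀ x ∈ S, 0 ≤ s * deriv g x := by
    by_cases hpos : ∀ x ∈ S, 0 ≤ deriv g x
    · exact ⟨1, Or.inl rfl, fun x hx => by simpa using hpos x hx⟩
    · push_neg at hpos
      obtain ⟨x₀, hx₀S, hx₀⟩ := hpos
      refine ⟨-1, Or.inr rfl, fun x hx => ?_⟩
      by_contra hlt
      push_neg at hlt
      have hxpos : 0 < deriv g x := by nlinarith
      have himg : (0 : ℝ) ∈ deriv g '' S := by
        have hord : OrdConnected (deriv g '' S) := hconv.ordConnected.image_deriv hg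
        have h1 : deriv g x₀ ∈ deriv g '' S := ⟨x₀, hx₀S, rfl⟩
        have h2 : deriv g x ∈ deriv g '' S := ⟨x, hx, rfl⟩
        exact hord.out h1 h2 ⟨hx₀.le, hxpos.le⟩
      obtain ⟨z, hzS, hz⟩ := himg
      exact hne z hzS hz
  -- integrability of `deriv g`
  have hintg : ∀ a ∈ S, ∀ b ∈ S, IntervalIntegrable (deriv g) volume a b := by
    intro a ha b hb
    have hsub : uIcc a b ⊆ S := hconv.ordConnected.uIcc_subset ha hb
    have h1 : IntervalIntegrable (fun t => s * deriv g t) volume a b := by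
      apply intervalIntegrable_deriv_of_nonneg (g := fun t => s * g t)
      · exact fun t ht => ((hg t (hsub ht)).const_mul s).continuousAt.continuousWithinAt
      · intro t ht
        have : t ∈ uIcc a b := Ioo_subset_Icc_self ht
        exact ((hg t (hsub this)).hasDerivAt.const_mul s)
      · intro t ht
        exact hsign t (hsub (Ioo_subset_Icc_self ht))
    have := h1.const_mul s
    refine this.congr_ae (Filter.Eventually.of_forall fun t => ?_)
    rcases hs with rfl | rfl <;> simp
  have hinth : ∀ a ∈ S, ∀ b ∈ S, IntervalIntegrable (fun t => deriv g t * r t) volume a b := by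
    intro a ha b hb
    exact (hintg a ha b hb).mul_continuousOn
      (hrcont.mono (hconv.ordConnected.uIcc_subset ha hb))
  -- rewrite Jf with r
  have hJf' : ∀ x, Jf x = ∫ t in ν₀..x, deriv g t * r t := by
    intro x; rw [hJf x]; simp only [div_eq_mul_inv]; rfl
  -- Jf is differentiable on S
  have hJd : ∀ c ∈ S, HasDerivAt Jf (deriv g c * r c) c := by
    intro c hc
    have hkey := key_deriv S hS hconv g r c s hc hs hg hsign hrcont hintg
    have hev : Jf =ᶠ[nhds c] fun y => Jf c + ∫ t in c..y, deriv g t * r t := by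
      filter_upwards [hS.mem_nhds hc] with y hy
      rw [hJf' y, hJf' c]
      exact (integral_add_adjacent_intervals (hinth ν₀ hν₀ c hc) (hinth c hc y hy)).symm
    exact ((hkey.const_add (Jf c)).congr_of_eventuallyEq hev)
  -- now the main computation
  rintro ⟨u, v⟩ hp
  set c : ℝ := ν (u, v) with hc
  have hcS : c ∈ S := hmaps _ hp
  have hline : DifferentiableAt ℝ (fun x : ℝ => (x, v)) u :=
    differentiableAt_id.prodMk (differentiableAt_const v)
  have hνp : DifferentiableAt ℝ ν (u, v) :=
    (hν.contDiffAt (hD.mem_nhds hp)).differentiableAt (by simp)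
  have hGp : DifferentiableAt ℝ G (u, v) :=
    (hG.contDiffAt (hD.mem_nhds hp)).differentiableAt (by simp)
  have hνd : HasDerivAt (fun x => ν (x, v)) (pu ν (u, v)) u :=
    (DifferentiableAt.comp u hνp hline).hasDerivAt
  have hGd : HasDerivAt (fun x => G (x, v)) (pu G (u, v)) u :=
    (DifferentiableAt.comp u hGp hline).hasDerivAt
  have hG0 : G (u, v) ≠ 0 := (hGpos _ hp).ne'
  have hsG : Real.sqrt (G (u, v)) ≠ 0 := Real.sqrt_ne_zero'.mpr (hGpos _ hp)
  have hsE : Real.sqrt (E (u, v)) ≠ 0 := Real.sqrt_ne_zero'.mpr (hEpos _ hp)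
  have hsqrt : HasDerivAt (fun x => Real.sqrt (G (x, v)))
      (pu G (u, v) / (2 * Real.sqrt (G (u, v)))) u := hGd.sqrt hG0
  have hJν : HasDerivAt (fun x => Jf (ν (x, v))) (deriv g c * r c * pu ν (u, v)) u :=
    (hJd c hcS).comp u hνd
  have hgν : HasDerivAt (fun x => g (ν (x, v))) (deriv g c * pu ν (u, v)) u :=
    ((hg c hcS).hasDerivAt).comp u hνd
  have hexp : HasDerivAt (fun x => Real.exp (Jf (ν (x, v))))
      (Real.exp (Jf c) * (deriv g c * r c * pu ν (u, v))) u := hJν.exp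
  have hμs : HasDerivAt (fun x => μ (x, v))
      (pu G (u, v) / (2 * Real.sqrt (G (u, v))) * Real.exp (Jf c)
        + Real.sqrt (G (u, v)) * (Real.exp (Jf c) * (deriv g c * r c * pu ν (u, v)))) u := by
    have := hsqrt.mul hexp
    refine HasDerivAt.congr_of_eventuallyEq this (Filter.Eventually.of_forall fun x => ?_)
    simp only [hμdef, Pi.mul_apply]
  have hpuμ : pu μ (u, v) = pu G (u, v) / (2 * Real.sqrt (G (u, v))) * Real.exp (Jf c)
        + Real.sqrt (G (u, v)) * (Real.exp (Jf c) * (deriv g c * r c * pu ν (u, v))) :=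
    hμs.deriv
  -- from Codazzi 2
  have hgνderiv : pu (fun q => g (ν q)) (u, v) = deriv g c * pu ν (u, v) := hgν.deriv
  have hcod := hCodazzi2 (u, v) hp
  rw [hgνderiv] at hcod
  have hfgc : f c - g c ≠ 0 := hfg c hcS
  have hgfc : g c - f c ≠ 0 := hgf c hcS
  have hGsq : Real.sqrt (G (u, v)) * Real.sqrt (G (u, v)) = G (u, v) :=
    Real.mul_self_sqrt (hGpos _ hp).le
  have hd1 : (2:ℝ) * G (u, v) * Real.sqrt (E (u, v)) ≠ 0 :=
    mul_ne_zero (mul_ne_zero two_ne_zero hG0) hsE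
  have hd2 : Real.sqrt (E (u, v)) * (f c - g c) ≠ 0 := mul_ne_zero hsE hfgc
  rw [div_eq_div_iff hd1 hd2] at hcod
  have hkey2 : pu G (u, v) * (f c - g c) = 2 * G (u, v) * (deriv g c * pu ν (u, v)) := by
    apply mul_right_cancel₀ hsE
    linear_combination hcod
  have hrc : r c = (g c - f c)⁻¹ := rfl
  have e1 : pu G (u, v) = 2 * G (u, v) * (deriv g c * pu ν (u, v)) / (f c - g c) := by
    rw [eq_div_iff hfgc]; linear_combination hkey2
  rw [hpuμ, hrc, e1, ← hGsq]
  field_simp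
  rw [Real.sqrt_sq (Real.sqrt_nonneg _)]
  ring
end
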